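/- For every n ≥ 1, t ≥ 3 and every voter matrix V : Fin n → Fin t → Bool in which every column has majority Y, there exists a proposal p supported by a majority of voters such that 3t·(number of matches of p) ≥ (2t − 4)·(number of matches of the all-Y proposal). That is, the relative representativeness r_V satisfies r_V ≥ 2/3 − 4/(3t). -/
import Mathlib


open Finset

/-- Number of topics on which opinion vector `v` agrees with proposal `p`. -/
def agreeCount {t : ℕ} (v p : Fin t → Bool) : ℕ :=
  (univ.filter (fun j => v j = p j)).card

/-- Voter `v` supports proposal `p`: agreement on at least half the topics,
    i.e. `2 * |{j : v j = p j}| ≥ t`. -/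
def Supports {t : ℕ} (v p : Fin t → Bool) : Prop :=
  t ≤ 2 * agreeCount v p

instance {t : ℕ} (v p : Fin t → Bool) : Decidable (Supports v p) :=
  Nat.decLe _ _

/-- Proposal `p` is supported by a majority of the voters of `V`:
    `2 * |{i : voter i supports p}| ≥ n`. -/
def MajSupported {n t : ℕ} (V : Fin n → Fin t → Bool) (p : Fin t → Bool) : Prop :=
  n ≤ 2 * (univ.filter (fun i => Supports (V i) p)).card

/-- Column `j` of `V` has majority Y: `2 * |{i : V i j = true}| ≥ n`. -/
def ColMajority {n t : ℕ} (V : Fin n → Fin t → Bool) (j : Fin t) : Prop :=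
  n ≤ 2 * (univ.filter (fun i => V i j = true)).card

/-- Number of true entries of a vector. -/
def trueCount {t : ℕ} (p : Fin t → Bool) : ℕ :=
  (univ.filter (fun j => p j = true)).card

/-- Number of matching opinions between the voters of `V` and proposal `p`. -/
def matchCount {n t : ℕ} (V : Fin n → Fin t → Bool) (p : Fin t → Bool) : ℕ :=
  (univ.filter (fun ij : Fin n × Fin t => V ij.1 ij.2 = p ij.2)).card

lemma agree_le {t : ℕ} (v p : Fin t → Bool) : agreeCount v p ≤ t := by
  unfold agreeCount
  calc (univ.filter (fun j => v j = p j)).card ≤ (univ : Finset (Fin t)).card :=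
        card_filter_le _ _
    _ = t := by simp

lemma agree_not {t : ℕ} (v p : Fin t → Bool) :
    agreeCount v p + agreeCount v (fun j => !(p j)) = t := by
  classical
  have h : (univ.filter (fun j => v j = (fun j => !(p j)) j)) =
      (univ.filter (fun j => ¬ (v j = p j))) := by
    apply filter_congr
    intro j _
    cases hv : v j <;> cases hp : p j <;> simp [hv, hp]
  unfold agreeCount
  rw [h, Finset.card_filter_add_card_filter_not]
  simp

lemma supports_or {t : ℕ} (v p : Fin t → Bool) :
    Supports v p ∨ Supports v (fun j => !(p j)) := by
  unfold Supports
  have := agree_not v p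
  omega

lemma maj_or {n t : ℕ} (V : Fin n → Fin t → Bool) (p : Fin t → Bool) :
    MajSupported V p ∨ MajSupported V (fun j => !(p j)) := by
  classical
  unfold MajSupported
  by_contra hc
  push_neg at hc
  obtain ⟨h1, h2⟩ := hc
  have hsub : (univ : Finset (Fin n)) ⊆
      univ.filter (fun i => Supports (V i) p) ∪
      univ.filter (fun i => Supports (V i) (fun j => !(p j))) := by
    intro i _
    simp only [mem_union, mem_filter, mem_univ, true_and]
    exact supports_or (V i) p
  have hle := (Finset.card_le_card hsub).trans (Finset.card_union_le _ _)
  simp only [card_univ, Fintype.card_fin] at hle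
  omega

lemma matchCount_rows {n t : ℕ} (V : Fin n → Fin t → Bool) (p : Fin t → Bool) :
    matchCount V p = ∑ i, agreeCount (V i) p := by
  unfold matchCount agreeCount
  rw [Finset.card_filter, Fintype.sum_prod_type]
  exact Finset.sum_congr rfl fun i _ => (Finset.card_filter _ _).symm

def colCount {n t : ℕ} (V : Fin n → Fin t → Bool) (j : Fin t) (b : Bool) : ℕ :=
  (univ.filter (fun i => V i j = b)).card

lemma colCount_le {n t : ℕ} (V : Fin n → Fin t → Bool) (j : Fin t) (b : Bool) :
    colCount V j b ≤ n := by
  unfold colCount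
  calc (univ.filter (fun i => V i j = b)).card ≤ (univ : Finset (Fin n)).card :=
        card_filter_le _ _
    _ = n := by simp

lemma matchCount_cols {n t : ℕ} (V : Fin n → Fin t → Bool) (p : Fin t → Bool) :
    matchCount V p = ∑ j, colCount V j (p j) := by
  unfold matchCount colCount
  rw [Finset.card_filter, Fintype.sum_prod_type_right]
  exact Finset.sum_congr rfl fun j _ => (Finset.card_filter _ _).symm

lemma match_not {n t : ℕ} (V : Fin n → Fin t → Bool) (p : Fin t → Bool) :
    matchCount V p + matchCount V (fun j => !(p j)) = n * t := by
  rw [matchCount_rows, matchCount_rows, ← Finset.sum_add_distrib]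
  simp [agree_not]

def pkProp (t k : ℕ) : Fin t → Bool := fun j => decide (k ≤ (j : ℕ))

lemma pk_zero (t : ℕ) : pkProp t 0 = (fun _ => true) := by
  funext j; simp [pkProp]

lemma pk_top (t k : ℕ) (h : t ≤ k) : pkProp t k = (fun _ => false) := by
  funext j
  have : ¬ (k ≤ (j : ℕ)) := by have := j.isLt; omega
  simp [pkProp, this]

lemma step_le {n t : ℕ} (V : Fin n → Fin t → Bool) (k : ℕ) (hk : k < t) :
    matchCount V (pkProp t k) ≤ matchCount V (pkProp t (k+1)) + n := by
  rw [matchCount_cols, matchCount_cols]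
  set jk : Fin t := ⟨k, hk⟩ with hjk
  have hsplit1 : ∑ j ∈ univ.erase jk, colCount V j (pkProp t k j)
      + colCount V jk (pkProp t k jk) = ∑ j, colCount V j (pkProp t k j) :=
    Finset.sum_erase_add _ _ (Finset.mem_univ jk)
  have hsplit2 : ∑ j ∈ univ.erase jk, colCount V j (pkProp t (k+1) j)
      + colCount V jk (pkProp t (k+1) jk) = ∑ j, colCount V j (pkProp t (k+1) j) :=
    Finset.sum_erase_add _ _ (Finset.mem_univ jk)
  have heq : ∑ j ∈ univ.erase jk, colCount V j (pkProp t k j)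
      = ∑ j ∈ univ.erase jk, colCount V j (pkProp t (k+1) j) := by
    apply Finset.sum_congr rfl
    intro j hj
    have hne : (j : ℕ) ≠ k := by
      intro h
      exact Finset.ne_of_mem_erase hj (by apply Fin.ext; simpa [hjk] using h)
    have hpe : pkProp t k j = pkProp t (k+1) j := by
      simp only [pkProp, decide_eq_decide]
      omega
    rw [hpe]
  have hb : colCount V jk (pkProp t k jk) ≤ n := colCount_le _ _ _
  have hb2 : 0 ≤ colCount V jk (pkProp t (k+1) jk) := Nat.zero_le _
  omega

/-- there is a majority-supported proposal p with
3t·(matches of p) ≥ (2t-4)·(matches of the all-Y proposal), i.e. r_V ≥ 2/3 - 4/(3t). -/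
theorem relative_two_thirds (n t : ℕ) (hn : 1 ≤ n) (ht : 3 ≤ t)
    (V : Fin n → Fin t → Bool) (hmaj : ∀ j, ColMajority V j) :
    ∃ p : Fin t → Bool, MajSupported V p ∧
      (2 * t - 4) * matchCount V (fun _ => true) ≤ 3 * t * matchCount V p := by
  classical
  obtain ⟨u, hu, hu4⟩ : ∃ u, 2 * t - 4 = u ∧ u + 4 = 2 * t := ⟨2 * t - 4, rfl, by omega⟩
  rw [hu]
  set M := matchCount V (fun _ => true) with hMdef
  -- if the all-Y proposal is majority supported, done
  by_cases hA : MajSupported V (fun _ : Fin t => true)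
  · exact ⟨_, hA, Nat.mul_le_mul_right _ (by omega)⟩
  -- the key dispatcher
  have key : ∀ k : ℕ,
      u * M ≤ 3 * t * matchCount V (pkProp t k) →
      u * M + 3 * t * matchCount V (pkProp t k) ≤ 3 * t * (n * t) →
      ∃ p, MajSupported V p ∧ u * M ≤ 3 * t * matchCount V p := by
    intro k h1 h2
    rcases maj_or V (pkProp t k) with h | h
    · exact ⟨_, h, h1⟩
    · refine ⟨_, h, ?_⟩
      have hsum := match_not V (pkProp t k)
      have hexp : 3 * t * matchCount V (pkProp t k)
          + 3 * t * matchCount V (fun j => !(pkProp t k j)) = 3 * t * (n * t) := by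
        rw [← Nat.mul_add, hsum]
      omega
  -- value of the walk endpoints
  have hv0 : matchCount V (pkProp t 0) = M := by rw [pk_zero]
  have hvt : M + matchCount V (pkProp t t) = n * t := by
    have h := match_not V (fun _ : Fin t => true)
    have hneg : (fun j : Fin t => !((fun _ : Fin t => true) j)) = pkProp t t := by
      funext j
      have hj : ¬ (t ≤ (j : ℕ)) := by have := j.isLt; omega
      simp [pkProp, hj]
    rw [hneg] at h
    exact h
  have hQt : u * M + 3 * t * matchCount V (pkProp t t) ≤ 3 * t * (n * t) := by
    have h1 : u * M ≤ 3 * t * M := Nat.mul_le_mul_right _ (by omega)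
    have h2 : 3 * t * M + 3 * t * matchCount V (pkProp t t) = 3 * t * (n * t) := by
      rw [← Nat.mul_add, hvt]
    omega
  by_cases hQ0 : u * M + 3 * t * matchCount V (pkProp t 0) ≤ 3 * t * (n * t)
  · exact key 0 (by rw [hv0]; exact Nat.mul_le_mul_right _ (by omega)) hQ0
  -- main case : all-Y not majority-supported
  -- the bound on M coming from the many voters who dislike all-Y
  have hMb : 4 * M + n + t + 1 ≤ 3 * n * t := by
    have hrows : M = ∑ i, agreeCount (V i) (fun _ : Fin t => true) := matchCount_rows V _
    set a : Fin n → ℕ := fun i => agreeCount (V i) (fun _ : Fin t => true) with ha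
    set A := univ.filter (fun i => Supports (V i) (fun _ : Fin t => true)) with hAdef
    set B := univ.filter (fun i => ¬ Supports (V i) (fun _ : Fin t => true)) with hBdef
    have hsplit : (∑ i ∈ A, a i) + (∑ i ∈ B, a i) = M := by
      rw [hrows]; exact Finset.sum_filter_add_sum_filter_not _ _ _
    have hcards : A.card + B.card = n := by
      rw [hAdef, hBdef, Finset.card_filter_add_card_filter_not]
      simp
    have hcA : 2 * A.card + 1 ≤ n := by
      have hA' : ¬ (n ≤ 2 * A.card) := hA
      omega
    have h1 : (∑ i ∈ A, a i) ≤ A.card * t := by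
      calc (∑ i ∈ A, a i) ≤ ∑ _i ∈ A, t :=
            Finset.sum_le_sum (fun i _ => agree_le _ _)
        _ = A.card * t := by rw [Finset.sum_const, smul_eq_mul]
    have h2 : 2 * (∑ i ∈ B, a i) + B.card ≤ B.card * t := by
      have hb : ∀ i ∈ B, 2 * a i + 1 ≤ t := by
        intro i hi
        rw [hBdef] at hi
        have hns := (Finset.mem_filter.mp hi).2
        unfold Supports at hns
        have hai : a i = agreeCount (V i) (fun _ : Fin t => true) := rfl
        omega
      calc 2 * (∑ i ∈ B, a i) + B.card = ∑ i ∈ B, (2 * a i + 1) := by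
            rw [Finset.sum_add_distrib, Finset.sum_const, smul_eq_mul, mul_one,
              Finset.mul_sum]
        _ ≤ ∑ _i ∈ B, t := Finset.sum_le_sum hb
        _ = B.card * t := by rw [Finset.sum_const, smul_eq_mul]
    have hprod : A.card * t + B.card * t = n * t := by
      rw [← Nat.add_mul, hcards]
    nlinarith [Nat.mul_le_mul_right (t + 1) hcA]
  -- find the first k where Q holds
  have hex : ∃ k, u * M + 3 * t * matchCount V (pkProp t k) ≤ 3 * t * (n * t) := ⟨t, hQt⟩
  set k := Nat.find hex with hkdef
  have hk : u * M + 3 * t * matchCount V (pkProp t k) ≤ 3 * t * (n * t) :=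
    Nat.find_spec hex
  have hkt : k ≤ t := Nat.find_le hQt
  have hk0 : k ≠ 0 := by
    intro h
    exact hQ0 (by rw [← h]; exact hk)
  have hprev : ¬ (u * M + 3 * t * matchCount V (pkProp t (k-1)) ≤ 3 * t * (n * t)) :=
    Nat.find_min hex (by omega)
  push_neg at hprev
  have hstep : matchCount V (pkProp t (k-1)) ≤ matchCount V (pkProp t k) + n := by
    have hlt : k - 1 < t := by omega
    have h := step_le V (k-1) hlt
    rwa [Nat.sub_add_cancel (by omega : 1 ≤ k)] at h
  refine key k ?_ hk
  -- the arithmetic heart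
  set v := matchCount V (pkProp t k) with hv
  set v' := matchCount V (pkProp t (k-1)) with hv'
  nlinarith [Nat.mul_le_mul_right (3 * t) hstep, Nat.mul_le_mul_right (t - 2) hMb,
    hprev, Nat.zero_le v, Nat.zero_le v', hu4, ht, hn]
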